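/- Let T be the (q+1)-homogeneous rooted tree, q ≥ 1, let 1 ≤ p < ∞ and let φ be a self-map of T. Then the composition operator C_φ is bounded on T_p if and only if α := sup_{n ≥ 0} (1/c_n) Σ_{m=0}^∞ N_{m,n} c_m < ∞. Moreover, in that case ‖C_φ‖^p = α. -/

import Mathlib

open scoped BigOperators Classical

noncomputable section

/-- `treeC q n` is the number `c_n` of vertices at level `n` of the
`(q+1)`-homogeneous rooted tree: `c_0 = 1` and `c_n = (q+1) q^(n-1)` for `n ≥ 1`. -/
def treeC (q n : ℕ) : ℕ := if n = 0 then 1 else (q + 1) * q ^ (n - 1)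

/-- An abstract `(q+1)`-homogeneous rooted tree, described by its vertex set, root,
level function `|·|` (graph distance to the root), and the level counts:
level `n` contains exactly `c_n = treeC q n` vertices. -/
structure HomTree (q : ℕ) where
  V : Type
  root : V
  level : V → ℕ
  level_eq_zero_iff : ∀ v : V, level v = 0 ↔ v = root
  finiteLevel : ∀ n : ℕ, {v : V | level v = n}.Finite
  card_level : ∀ n : ℕ, (finiteLevel n).toFinset.card = treeC q n

namespace HomTree

variable {q : ℕ} (T : HomTree q)

/-- The set `D_n` of vertices of level `n`, as a finset. -/
def levelFinset (n : ℕ) : Finset T.V := (T.finiteLevel n).toFinset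

/-- `M_p(n, f)` for `0 < p < ∞`:
`M_p(n,f) = ((1/c_n) ∑_{|v|=n} |f v|^p)^(1/p)` (which equals `|f o|` for `n = 0`). -/
def Mp (p : ℝ) (n : ℕ) (f : T.V → ℂ) : ℝ :=
  ((1 / (treeC q n : ℝ)) * ∑ v ∈ T.levelFinset n, ‖f v‖ ^ p) ^ (1 / p)

/-- `M_∞(n, f) = max_{|v| = n} |f v|`. -/
def Minf (n : ℕ) (f : T.V → ℂ) : ℝ :=
  sSup ((fun v => ‖f v‖) '' {v : T.V | T.level v = n})

/-- `f ∈ T_p`, i.e. `‖f‖_p = sup_n M_p(n,f) < ∞`. -/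
def memTp (p : ℝ) (f : T.V → ℂ) : Prop := BddAbove (Set.range fun n => T.Mp p n f)

/-- `‖f‖_p = sup_n M_p(n, f)`. -/
def normTp (p : ℝ) (f : T.V → ℂ) : ℝ := ⨆ n, T.Mp p n f

/-- `f ∈ T_∞`. -/
def memTinf (f : T.V → ℂ) : Prop := BddAbove (Set.range fun n => T.Minf n f)

/-- `‖f‖_∞ = sup_n M_∞(n, f)`. -/
def normTinf (f : T.V → ℂ) : ℝ := ⨆ n, T.Minf n f

/-- `f ∈ T_{p,0}`: `f ∈ T_p` and `M_p(n,f) → 0` as `n → ∞`. -/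
def memTp0 (p : ℝ) (f : T.V → ℂ) : Prop :=
  T.memTp p f ∧ Filter.Tendsto (fun n => T.Mp p n f) Filter.atTop (nhds 0)

/-- `f ∈ T_{∞,0}`. -/
def memTinf0 (f : T.V → ℂ) : Prop :=
  T.memTinf f ∧ Filter.Tendsto (fun n => T.Minf n f) Filter.atTop (nhds 0)

/-- `N_φ(n, w)`: the number of preimages of `w` under `φ` at level `n`. -/
def Nphi (phi : T.V → T.V) (n : ℕ) (w : T.V) : ℕ :=
  ((T.levelFinset n).filter fun v => phi v = w).card

/-- `N_{m,n} = max_{|w| = m} N_φ(n, w)`. -/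
def Nmax (phi : T.V → T.V) (m n : ℕ) : ℕ :=
  (T.levelFinset m).sup fun w => T.Nphi phi n w

/-- `C_φ` is a bounded operator on `T_p`: it maps `T_p` into `T_p` and
`‖f ∘ φ‖_p ≤ C ‖f‖_p` for some constant `C`. -/
def BoundedCompTp (p : ℝ) (phi : T.V → T.V) : Prop :=
  (∀ f : T.V → ℂ, T.memTp p f → T.memTp p (f ∘ phi)) ∧
  ∃ C : ℝ, ∀ f : T.V → ℂ, T.memTp p f → T.normTp p (f ∘ phi) ≤ C * T.normTp p f

/-- The operator norm of `C_φ` on `T_p`: `sup {‖f ∘ φ‖_p : f ∈ T_p, ‖f‖_p = 1}`. -/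
def opNormTp (p : ℝ) (phi : T.V → T.V) : ℝ :=
  sSup {x : ℝ | ∃ f : T.V → ℂ, T.memTp p f ∧ T.normTp p f = 1 ∧ x = T.normTp p (f ∘ phi)}

/-- `C_φ` is a bounded operator on `T_{p,0}`. -/
def BoundedCompTp0 (p : ℝ) (phi : T.V → T.V) : Prop :=
  (∀ f : T.V → ℂ, T.memTp0 p f → T.memTp0 p (f ∘ phi)) ∧
  ∃ C : ℝ, ∀ f : T.V → ℂ, T.memTp0 p f → T.normTp p (f ∘ phi) ≤ C * T.normTp p f

/-- The operator norm of `C_φ` on `T_{p,0}`. -/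
def opNormTp0 (p : ℝ) (phi : T.V → T.V) : ℝ :=
  sSup {x : ℝ | ∃ f : T.V → ℂ, T.memTp0 p f ∧ T.normTp p f = 1 ∧ x = T.normTp p (f ∘ phi)}

/-- `C_φ` is a bounded operator on `T_{∞,0}`. -/
def BoundedCompTinf0 (phi : T.V → T.V) : Prop :=
  (∀ f : T.V → ℂ, T.memTinf0 f → T.memTinf0 (f ∘ phi)) ∧
  ∃ C : ℝ, ∀ f : T.V → ℂ, T.memTinf0 f → T.normTinf (f ∘ phi) ≤ C * T.normTinf f

end HomTree

/-!
The level-`n` sum of `|f ∘ φ|^p` regroups by the target vertex `w = φ v` as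
`∑_m ∑_{|w|=m} N_φ(n,w) |f w|^p`, and bounding `N_φ(n,w) ≤ N_{m,n}` and
`∑_{|w|=m} |f w|^p ≤ c_m ‖f‖_p^p` gives `M_p(n, f ∘ φ)^p ≤ α_n ‖f‖_p^p`, where
`α_n = (1/c_n) ∑_m N_{m,n} c_m`. Conversely, the function equal to `c_m^{1/p}` at one
maximiser of `N_φ(n, ·)` on each level `m`, and `0` elsewhere, has norm `1` and attains
`M_p(n, f ∘ φ)^p = α_n`. Hence `‖C_φ‖^p = sup_n α_n`.
-/

namespace HomTree

open Finset

variable {q : ℕ} (T : HomTree q)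

theorem treeC_pos (hq : 1 ≤ q) (n : ℕ) : 0 < treeC q n := by
  unfold treeC
  split
  · exact one_pos
  · exact Nat.mul_pos q.succ_pos (pow_pos hq _)

@[simp]
theorem mem_levelFinset {v : T.V} {n : ℕ} : v ∈ T.levelFinset n ↔ T.level v = n := by
  simp [levelFinset]

theorem levelFinset_nonempty (hq : 1 ≤ q) (n : ℕ) : (T.levelFinset n).Nonempty := by
  rw [← card_pos, levelFinset, T.card_level]
  exact treeC_pos hq n

section Regrouping

variable {M : Type*} [AddCommMonoid M] (phi : T.V → T.V) (n : ℕ) (g : T.V → M)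

theorem sum_comp_filter_level_eq (m : ℕ) :
    ∑ v ∈ T.levelFinset n with T.level (phi v) = m, g (phi v) =
      ∑ w ∈ T.levelFinset m, T.Nphi phi n w • g w := by
  rw [← sum_fiberwise_of_maps_to (g := phi) (t := T.levelFinset m) (by simp)]
  refine sum_congr rfl fun w hw => ?_
  rw [T.mem_levelFinset] at hw
  rw [filter_filter, Nphi, ← sum_const]
  refine sum_congr (filter_congr fun v _ => ⟨And.right, fun h => ⟨h ▸ hw, h⟩⟩)
    fun v hv => ?_
  rw [(mem_filter.1 hv).2]

theorem sum_comp_eq_sum_Nphi_smul {S : Finset ℕ}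
    (hS : ∀ v ∈ T.levelFinset n, T.level (phi v) ∈ S) :
    ∑ v ∈ T.levelFinset n, g (phi v) =
      ∑ m ∈ S, ∑ w ∈ T.levelFinset m, T.Nphi phi n w • g w := by
  rw [← sum_fiberwise_of_maps_to hS]
  exact sum_congr rfl fun m _ => T.sum_comp_filter_level_eq phi n g m

end Regrouping

theorem Nmax_eq_zero_of_not_mem {phi : T.V → T.V} {n m : ℕ} {S : Finset ℕ}
    (hS : ∀ v ∈ T.levelFinset n, T.level (phi v) ∈ S) (hm : m ∉ S) :
    T.Nmax phi m n = 0 := by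
  rw [Nmax, ← Nat.bot_eq_zero, Finset.sup_eq_bot_iff]
  intro w hw
  rw [Nat.bot_eq_zero, Nphi, card_eq_zero, filter_eq_empty_iff]
  rintro v hv rfl
  exact hm ((T.mem_levelFinset.1 hw) ▸ hS v hv)

theorem tsum_Nmax_mul_treeC_eq_sum {phi : T.V → T.V} {n : ℕ} {S : Finset ℕ}
    (hS : ∀ v ∈ T.levelFinset n, T.level (phi v) ∈ S) :
    ∑' m : ℕ, (T.Nmax phi m n : ℝ) * (treeC q m : ℝ) =
      ∑ m ∈ S, (T.Nmax phi m n : ℝ) * (treeC q m : ℝ) :=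
  tsum_eq_sum fun m hm => by simp [T.Nmax_eq_zero_of_not_mem hS hm]

def compWeight (phi : T.V → T.V) (n : ℕ) : ℝ :=
  (1 / (treeC q n : ℝ)) * ∑' m : ℕ, (T.Nmax phi m n : ℝ) * (treeC q m : ℝ)

theorem compWeight_nonneg (phi : T.V → T.V) (n : ℕ) : 0 ≤ T.compWeight phi n := by
  unfold compWeight
  positivity

theorem Mp_nonneg (p : ℝ) (n : ℕ) (f : T.V → ℂ) : 0 ≤ T.Mp p n f := by
  unfold Mp
  positivity

theorem normTp_nonneg (p : ℝ) (f : T.V → ℂ) : 0 ≤ T.normTp p f :=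
  Real.iSup_nonneg fun n => T.Mp_nonneg p n f

section Norms

variable {p : ℝ} {f : T.V → ℂ}

theorem sum_norm_rpow_eq (hq : 1 ≤ q) (hp : p ≠ 0) (n : ℕ) (f : T.V → ℂ) :
    ∑ v ∈ T.levelFinset n, ‖f v‖ ^ p = treeC q n * T.Mp p n f ^ p := by
  have hc : (treeC q n : ℝ) ≠ 0 := by exact_mod_cast (treeC_pos hq n).ne'
  rw [Mp, one_div p, Real.rpow_inv_rpow (by positivity) hp]
  field_simp

theorem Mp_le_normTp (hf : T.memTp p f) (n : ℕ) : T.Mp p n f ≤ T.normTp p f :=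
  le_ciSup hf n

theorem Mp_comp_rpow_le (hq : 1 ≤ q) (hp : 0 < p) (phi : T.V → T.V) (hf : T.memTp p f)
    (n : ℕ) : T.Mp p n (f ∘ phi) ^ p ≤ T.compWeight phi n * T.normTp p f ^ p := by
  set S := (T.levelFinset n).image fun v => T.level (phi v)
  have hS : ∀ v ∈ T.levelFinset n, T.level (phi v) ∈ S := fun v hv => mem_image_of_mem _ hv
  have hc : (0 : ℝ) < treeC q n := by exact_mod_cast treeC_pos hq n
  have hlevel : ∀ m, ∑ w ∈ T.levelFinset m, T.Nphi phi n w • ‖f w‖ ^ p ≤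
      (T.Nmax phi m n * treeC q m) * T.normTp p f ^ p := fun m =>
    calc ∑ w ∈ T.levelFinset m, T.Nphi phi n w • ‖f w‖ ^ p
        ≤ ∑ w ∈ T.levelFinset m, (T.Nmax phi m n : ℝ) * ‖f w‖ ^ p := by
          refine sum_le_sum fun w hw => ?_
          rw [nsmul_eq_mul]
          gcongr
          exact le_sup (f := T.Nphi phi n) hw
      _ = T.Nmax phi m n * (treeC q m * T.Mp p m f ^ p) := by
          rw [← mul_sum, T.sum_norm_rpow_eq hq hp.ne' m f]
      _ ≤ T.Nmax phi m n * (treeC q m * T.normTp p f ^ p) := by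
          gcongr
          · exact T.Mp_nonneg p m f
          · exact T.Mp_le_normTp hf m
      _ = _ := by ring
  have hsum : treeC q n * T.Mp p n (f ∘ phi) ^ p ≤
      (∑' m : ℕ, (T.Nmax phi m n : ℝ) * treeC q m) * T.normTp p f ^ p := by
    rw [← T.sum_norm_rpow_eq hq hp.ne', tsum_Nmax_mul_treeC_eq_sum T hS, sum_mul]
    simp only [Function.comp_apply]
    rw [T.sum_comp_eq_sum_Nphi_smul phi n (fun w => ‖f w‖ ^ p) hS]
    exact sum_le_sum fun m _ => hlevel m
  rw [compWeight, mul_assoc, one_div, le_inv_mul_iff₀ hc]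
  exact hsum

theorem Mp_comp_le (hq : 1 ≤ q) (hp : 0 < p) (phi : T.V → T.V) (hf : T.memTp p f) (n : ℕ) :
    T.Mp p n (f ∘ phi) ≤ T.compWeight phi n ^ p⁻¹ * T.normTp p f := by
  have hp' := hp.ne'
  calc T.Mp p n (f ∘ phi)
      = (T.Mp p n (f ∘ phi) ^ p) ^ p⁻¹ := (Real.rpow_rpow_inv (T.Mp_nonneg p n _) hp').symm
    _ ≤ (T.compWeight phi n * T.normTp p f ^ p) ^ p⁻¹ := by
        have := T.Mp_nonneg p n (f ∘ phi)
        gcongr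
        exact T.Mp_comp_rpow_le hq hp phi hf n
    _ = T.compWeight phi n ^ p⁻¹ * T.normTp p f := by
        rw [Real.mul_rpow (T.compWeight_nonneg phi n) (Real.rpow_nonneg (T.normTp_nonneg p f) p),
          Real.rpow_rpow_inv (T.normTp_nonneg p f) hp']

theorem normTp_comp_le (hq : 1 ≤ q) (hp : 0 < p) (phi : T.V → T.V) {A : ℝ}
    (hA : ∀ n, T.compWeight phi n ≤ A) (hf : T.memTp p f) :
    T.memTp p (f ∘ phi) ∧ T.normTp p (f ∘ phi) ≤ A ^ p⁻¹ * T.normTp p f := by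
  have hlevel : ∀ n, T.Mp p n (f ∘ phi) ≤ A ^ p⁻¹ * T.normTp p f := fun n =>
    (T.Mp_comp_le hq hp phi hf n).trans <| by
      have := T.normTp_nonneg p f
      have := T.compWeight_nonneg phi n
      gcongr
      exact hA n
  exact ⟨⟨_, Set.forall_mem_range.2 hlevel⟩, ciSup_le hlevel⟩

end Norms

def maxFiberVertex (phi : T.V → T.V) (n m : ℕ) : T.V :=
  @Classical.epsilon T.V ⟨T.root⟩ fun w =>
    w ∈ T.levelFinset m ∧ T.Nphi phi n w = T.Nmax phi m n

theorem maxFiberVertex_spec (hq : 1 ≤ q) (phi : T.V → T.V) (n m : ℕ) :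
    T.maxFiberVertex phi n m ∈ T.levelFinset m ∧
      T.Nphi phi n (T.maxFiberVertex phi n m) = T.Nmax phi m n := by
  obtain ⟨w, hw, h⟩ :=
    (T.levelFinset m).exists_mem_eq_sup (T.levelFinset_nonempty hq m) (T.Nphi phi n)
  exact Classical.epsilon_spec
    (p := fun w => w ∈ T.levelFinset m ∧ T.Nphi phi n w = T.Nmax phi m n) ⟨w, hw, h.symm⟩

-- The value `c_m^{1/p}` makes `M_p(m, testFun) = 1` on every level `m`.
def testFun (p : ℝ) (phi : T.V → T.V) (n : ℕ) (w : T.V) : ℂ :=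
  if w = T.maxFiberVertex phi n (T.level w) then ((treeC q (T.level w) : ℝ) ^ p⁻¹ : ℝ) else 0

section TestFun

variable {p : ℝ} (phi : T.V → T.V) (n : ℕ)

theorem sum_mul_norm_testFun_rpow (hq : 1 ≤ q) (hp : p ≠ 0) (m : ℕ) (h : T.V → ℝ) :
    ∑ w ∈ T.levelFinset m, h w * ‖T.testFun p phi n w‖ ^ p =
      h (T.maxFiberVertex phi n m) * treeC q m := by
  have hterm : ∀ w ∈ T.levelFinset m, h w * ‖T.testFun p phi n w‖ ^ p =
      if w = T.maxFiberVertex phi n m then h w * treeC q m else 0 := by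
    intro w hw
    rw [T.mem_levelFinset] at hw
    subst hw
    unfold testFun
    split_ifs
    · rw [Complex.norm_real, Real.norm_of_nonneg (by positivity),
        Real.rpow_inv_rpow (by positivity) hp]
    · rw [norm_zero, Real.zero_rpow hp, mul_zero]
  rw [sum_congr rfl hterm, sum_ite_eq', if_pos (T.maxFiberVertex_spec hq phi n m).1]

theorem Mp_testFun (hq : 1 ≤ q) (hp : p ≠ 0) (m : ℕ) : T.Mp p m (T.testFun p phi n) = 1 := by
  have hc : (treeC q m : ℝ) ≠ 0 := by exact_mod_cast (treeC_pos hq m).ne'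
  have hsum := T.sum_mul_norm_testFun_rpow phi n hq hp m 1
  simp only [Pi.one_apply, one_mul] at hsum
  rw [Mp, hsum, one_div, inv_mul_cancel₀ hc, Real.one_rpow]

theorem memTp_testFun (hq : 1 ≤ q) (hp : p ≠ 0) : T.memTp p (T.testFun p phi n) :=
  ⟨1, Set.forall_mem_range.2 fun m => (T.Mp_testFun phi n hq hp m).le⟩

theorem normTp_testFun (hq : 1 ≤ q) (hp : p ≠ 0) : T.normTp p (T.testFun p phi n) = 1 := by
  simp only [normTp, T.Mp_testFun phi n hq hp, ciSup_const]

theorem Mp_testFun_comp_rpow (hq : 1 ≤ q) (hp : p ≠ 0) :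
    T.Mp p n (T.testFun p phi n ∘ phi) ^ p = T.compWeight phi n := by
  set S := (T.levelFinset n).image fun v => T.level (phi v)
  have hS : ∀ v ∈ T.levelFinset n, T.level (phi v) ∈ S := fun v hv => mem_image_of_mem _ hv
  have hc : (treeC q n : ℝ) ≠ 0 := by exact_mod_cast (treeC_pos hq n).ne'
  have hsum : treeC q n * T.Mp p n (T.testFun p phi n ∘ phi) ^ p =
      ∑' m : ℕ, (T.Nmax phi m n : ℝ) * treeC q m := by
    rw [← T.sum_norm_rpow_eq hq hp, tsum_Nmax_mul_treeC_eq_sum T hS]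
    simp only [Function.comp_apply]
    rw [T.sum_comp_eq_sum_Nphi_smul phi n (fun w => ‖T.testFun p phi n w‖ ^ p) hS]
    refine sum_congr rfl fun m _ => ?_
    simp only [nsmul_eq_mul]
    rw [T.sum_mul_norm_testFun_rpow phi n hq hp m, (T.maxFiberVertex_spec hq phi n m).2]
  rw [compWeight, ← hsum, one_div, inv_mul_cancel_left₀ hc]

theorem compWeight_rpow_inv_le_normTp_comp (hq : 1 ≤ q) (hp : 0 < p)
    (h : T.memTp p (T.testFun p phi n ∘ phi)) :
    T.compWeight phi n ^ p⁻¹ ≤ T.normTp p (T.testFun p phi n ∘ phi) := by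
  rw [← T.Mp_testFun_comp_rpow phi n hq hp.ne', Real.rpow_rpow_inv (T.Mp_nonneg p n _) hp.ne']
  exact T.Mp_le_normTp h n

end TestFun

section Operator

variable {p : ℝ} {phi : T.V → T.V}

theorem bddAbove_compWeight_of_boundedCompTp (hq : 1 ≤ q) (hp : 0 < p)
    (h : T.BoundedCompTp p phi) : BddAbove (Set.range (T.compWeight phi)) := by
  obtain ⟨hmem, C, hC⟩ := h
  refine ⟨C ^ p, Set.forall_mem_range.2 fun n => ?_⟩
  have htest := T.memTp_testFun phi n hq hp.ne'
  have hle := (T.compWeight_rpow_inv_le_normTp_comp phi n hq hp (hmem _ htest)).trans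
    (hC _ htest)
  rw [T.normTp_testFun phi n hq hp.ne', mul_one] at hle
  have hC0 : 0 ≤ C := (Real.rpow_nonneg (T.compWeight_nonneg phi n) _).trans hle
  rwa [Real.rpow_inv_le_iff_of_pos (T.compWeight_nonneg phi n) hC0 hp] at hle

theorem boundedCompTp_of_bddAbove (hq : 1 ≤ q) (hp : 0 < p)
    (h : BddAbove (Set.range (T.compWeight phi))) : T.BoundedCompTp p phi := by
  obtain ⟨A, hA⟩ := h
  have hA' := Set.forall_mem_range.1 hA
  exact ⟨fun f hf => (T.normTp_comp_le hq hp phi hA' hf).1,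
    A ^ p⁻¹, fun f hf => (T.normTp_comp_le hq hp phi hA' hf).2⟩

theorem opNormTp_eq (hq : 1 ≤ q) (hp : 0 < p) (h : BddAbove (Set.range (T.compWeight phi))) :
    T.opNormTp p phi = (⨆ n, T.compWeight phi n) ^ p⁻¹ := by
  have htest : ∀ n, T.normTp p (T.testFun p phi n ∘ phi) ∈
      {x | ∃ f, T.memTp p f ∧ T.normTp p f = 1 ∧ x = T.normTp p (f ∘ phi)} := fun n =>
    ⟨_, T.memTp_testFun phi n hq hp.ne', T.normTp_testFun phi n hq hp.ne', rfl⟩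
  refine IsLUB.csSup_eq ⟨?_, fun b hb => ?_⟩ ⟨_, htest 0⟩
  · rintro _ ⟨f, hf, hf1, rfl⟩
    simpa [hf1] using (T.normTp_comp_le hq hp phi (le_ciSup h) hf).2
  · have hn : ∀ n, T.compWeight phi n ^ p⁻¹ ≤ b := fun n =>
      (T.compWeight_rpow_inv_le_normTp_comp phi n hq hp
        ((T.boundedCompTp_of_bddAbove hq hp h).1 _ (T.memTp_testFun phi n hq hp.ne'))).trans
        (hb (htest n))
    have hb0 : 0 ≤ b := (Real.rpow_nonneg (T.compWeight_nonneg phi 0) _).trans (hn 0)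
    rw [Real.rpow_inv_le_iff_of_pos (Real.iSup_nonneg (T.compWeight_nonneg phi)) hb0 hp]
    exact ciSup_le fun n =>
      (Real.rpow_inv_le_iff_of_pos (T.compWeight_nonneg phi n) hb0 hp).1 (hn n)

end Operator

end HomTree

/-- `C_φ` is bounded on `T_p` iff `α = sup_n (1/c_n) ∑_m N_{m,n} c_m < ∞`; in that case
`‖C_φ‖^p = α`. -/
theorem bounded_comp_Tp_iff (q : ℕ) (hq : 1 ≤ q) (T : HomTree q) (p : ℝ) (hp : 1 ≤ p)
    (phi : T.V → T.V) :
    (T.BoundedCompTp p phi ↔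
      BddAbove (Set.range fun n : ℕ =>
        (1 / (treeC q n : ℝ)) * ∑' m : ℕ, (T.Nmax phi m n : ℝ) * (treeC q m : ℝ))) ∧
    (T.BoundedCompTp p phi →
      T.opNormTp p phi ^ p =
        ⨆ n : ℕ, (1 / (treeC q n : ℝ)) * ∑' m : ℕ, (T.Nmax phi m n : ℝ) * (treeC q m : ℝ)) := by
  have hp0 : 0 < p := by linarith
  have hiff : T.BoundedCompTp p phi ↔ BddAbove (Set.range (T.compWeight phi)) :=
    ⟨T.bddAbove_compWeight_of_boundedCompTp hq hp0, T.boundedCompTp_of_bddAbove hq hp0⟩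
  refine ⟨hiff, fun h => ?_⟩
  rw [T.opNormTp_eq hq hp0 (hiff.1 h),
    Real.rpow_inv_rpow (Real.iSup_nonneg (T.compWeight_nonneg phi)) hp0.ne']
  rfl
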